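/- Subgraph criterion for magnetic sparseness: Let (b,θ,q,m) be a magnetic graph over X, p ∈ [1,∞), J an index set, a, k ≥ 0, C > c > 0 and M > 0. Suppose (b_j,θ,q_j,m_j)_{j∈J} is a family of magnetic graphs over X, each (a,k)_p-magnetic-sparse with the same magnetic potential θ, such that for all x, y ∈ X: (a) c·b(x,y) ≤ Σ_{j∈J} b_j(x,y) ≤ C·b(x,y); (b) Σ_{j∈J} q_{j,+}(x) m_j(x) ≤ C·q₊(x) m(x); (c) Σ_{j∈J} m_j(x) ≤ M·m(x). Then (b,θ,q,m) is (aC/c + C/c − 1, Mk/c)_p-magnetic-sparse. Moreover, if k = 0, conditions (a) and (b) alone imply that (b,θ,q,m) is (aC/c + C/c − 1, 0)_p-magnetic-sparse. -/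

import Mathlib

open Complex MeasureTheory
open scoped Classical

noncomputable section

variable {X : Type*}

/-- The structural hypotheses of a magnetic graph `(b, θ, q, m)` over `X`:
`b` is nonnegative, symmetric, has zero diagonal and summable rows; the
magnetic potential `θ` is antisymmetric modulo `2π`; the measure `m` is positive. -/
def IsMagneticGraph (b θ : X → X → ℝ) (m : X → ℝ) : Prop :=
  (∀ x y, 0 ≤ b x y) ∧ (∀ x y, b x y = b y x) ∧ (∀ x, b x x = 0) ∧
  (∀ x, Summable fun y => b x y) ∧
  (∀ x y, ∃ k : ℤ, θ x y + θ y x = 2 * Real.pi * k) ∧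
  (∀ x, 0 < m x)

/-- The `p`-frustration index `ι_{p,θ}(W)` of a finite set `W`. -/
def frust (b θ : X → X → ℝ) (p : ℝ) (W : Finset X) : ℝ :=
  sInf {r : ℝ | ∃ τ : X → ℂ, (∀ x ∈ W, ‖τ x‖ = 1) ∧
    r = (1 / 2) * ∑ x ∈ W, ∑ y ∈ W,
      b x y * ‖τ x - Complex.exp ((θ x y : ℂ) * Complex.I) * τ y‖ ^ p}

/-- The measure `b(∂W)` of the boundary `∂W = (W×(X∖W)) ∪ ((X∖W)×W)`. -/
def bBoundary (b : X → X → ℝ) (W : Finset X) : ℝ :=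
  (∑ x ∈ W, ∑' y : {y : X // y ∉ W}, b x ↑y) +
  (∑ y ∈ W, ∑' x : {x : X // x ∉ W}, b ↑x y)

/-- `(a,k)_p`-magnetic-sparseness. -/
def MagSparse (b θ : X → X → ℝ) (q m : X → ℝ) (p a k : ℝ) : Prop :=
  ∀ W : Finset X,
    (∑ x ∈ W, ∑ y ∈ W, b x y) ≤
      (1 + a) * frust b θ p W +
      a * ((1 / 2) * bBoundary b W + ∑ x ∈ W, max (q x) 0 * m x) +
      k * ∑ x ∈ W, m x

/-- The energy functional `Q_{p,θ}` on finitely supported functions. -/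
def Qform (b θ : X → X → ℝ) (q m : X → ℝ) (p : ℝ) (f : X → ℂ) : ℝ :=
  (1 / 2) * ∑' x, ∑' y, b x y * ‖f x - Complex.exp ((θ x y : ℂ) * Complex.I) * f y‖ ^ p +
  ∑' x, q x * ‖f x‖ ^ p * m x

/-- The weighted vertex degree `Deg(x) = (1/m(x)) Σ_y b(x,y) + q(x)`. -/
def Degf (b : X → X → ℝ) (q m : X → ℝ) (x : X) : ℝ :=
  (1 / m x) * ∑' y, b x y + q x

/-- The pairing `⟨Deg, |f|^p⟩ = Σ_x Deg(x) |f(x)|^p m(x)`. -/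
def degPair (b : X → X → ℝ) (q m : X → ℝ) (p : ℝ) (f : X → ℂ) : ℝ :=
  ∑' x, Degf b q m x * ‖f x‖ ^ p * m x

/-- The `p`-norm to the `p`: `‖f‖_p^p = Σ_x |f(x)|^p m(x)`. -/
def pNorm (m : X → ℝ) (p : ℝ) (f : X → ℂ) : ℝ :=
  ∑' x, ‖f x‖ ^ p * m x

/-- `q ∈ K_α^{p,θ}` with constant `C`: the negative part of `q` is form bounded. -/
def InKClass (b θ : X → X → ℝ) (q m : X → ℝ) (p α C : ℝ) : Prop :=
  ∀ f : X → ℂ, (Function.support f).Finite →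
    (∑' x, max (-q x) 0 * ‖f x‖ ^ p * m x) ≤
      α * Qform b θ (fun x => max (q x) 0) m p f + C * pNorm m p f

/-! Fix `W` and a competitor `τ` unimodular on `W`, and add up over `j` the sparseness
inequalities of the `b_j` evaluated at `τ`. By (a) the left-hand sides add up to at least
`c · b(W × W)`, and by (a) and (b) the energies, boundary terms and potential terms add up to at
most `C` times those of `b` (for the boundary this is Tonelli for nonnegative double series).
Taking the infimum over `τ` and dividing by `c` gives the claim: the surplus `C/c - 1` in the
coefficient is absorbed by the nonnegative boundary and potential term, and the measure term
`k · Σ_j m_j(W) ≤ M k m(W)` vanishes outright when `k = 0`. -/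

def frustEnergy (b θ : X → X → ℝ) (p : ℝ) (W : Finset X) (τ : X → ℂ) : ℝ :=
  (1 / 2) * ∑ x ∈ W, ∑ y ∈ W, b x y * ‖τ x - Complex.exp ((θ x y : ℂ) * Complex.I) * τ y‖ ^ p

section Frustration

variable {b θ : X → X → ℝ} {p : ℝ} {W : Finset X}

lemma frustEnergy_nonneg (hb : ∀ x y, 0 ≤ b x y) (τ : X → ℂ) : 0 ≤ frustEnergy b θ p W τ :=
  mul_nonneg (by norm_num) <| Finset.sum_nonneg fun x _ => Finset.sum_nonneg fun y _ =>
    mul_nonneg (hb x y) (Real.rpow_nonneg (norm_nonneg _) _)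

lemma frust_le_frustEnergy (hb : ∀ x y, 0 ≤ b x y) {τ : X → ℂ} (hτ : ∀ x ∈ W, ‖τ x‖ = 1) :
    frust b θ p W ≤ frustEnergy b θ p W τ :=
  csInf_le ⟨0, by rintro _ ⟨σ, -, rfl⟩; exact frustEnergy_nonneg hb σ⟩ ⟨τ, hτ, rfl⟩

lemma le_frust {r : ℝ} (h : ∀ τ : X → ℂ, (∀ x ∈ W, ‖τ x‖ = 1) → r ≤ frustEnergy b θ p W τ) :
    r ≤ frust b θ p W :=
  le_csInf ⟨_, fun _ => 1, fun _ _ => norm_one, rfl⟩ (by rintro _ ⟨τ, hτ, rfl⟩; exact h τ hτ)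

end Frustration

lemma bBoundary_nonneg {b : X → X → ℝ} (hb : ∀ x y, 0 ≤ b x y) (W : Finset X) :
    0 ≤ bBoundary b W :=
  add_nonneg (Finset.sum_nonneg fun _ _ => tsum_nonneg fun _ => hb _ _)
    (Finset.sum_nonneg fun _ _ => tsum_nonneg fun _ => hb _ _)

lemma sum_le_frustEnergy_of_magSparse {b θ : X → X → ℝ} {q m : X → ℝ} {p a k : ℝ}
    (hs : MagSparse b θ q m p a k) (ha : 0 ≤ a) (hb : ∀ x y, 0 ≤ b x y) {W : Finset X}
    {τ : X → ℂ} (hτ : ∀ x ∈ W, ‖τ x‖ = 1) :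
    ∑ x ∈ W, ∑ y ∈ W, b x y ≤
      (1 + a) * frustEnergy b θ p W τ +
      a * ((1 / 2) * bBoundary b W + ∑ x ∈ W, max (q x) 0 * m x) + k * ∑ x ∈ W, m x := by
  have := mul_le_mul_of_nonneg_left (frust_le_frustEnergy (θ := θ) (p := p) hb hτ)
    (by linarith : (0 : ℝ) ≤ 1 + a)
  linarith [hs W]

lemma hasSum_tsum_of_summable_tsum {J Y : Type*} {g : J → Y → ℝ} (hg : ∀ j y, 0 ≤ g j y)
    (hgs : ∀ y, Summable (g · y)) (hgs' : Summable fun y => ∑' j, g j y) :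
    HasSum (fun j => ∑' y, g j y) (∑' y, ∑' j, g j y) := by
  have hswap : Summable fun p : Y × J => g p.2 p.1 :=
    (summable_prod_of_nonneg fun p => hg p.2 p.1).2 ⟨hgs, hgs'⟩
  have h : Summable (Function.uncurry g) := hswap.prod_symm
  rw [h.tsum_comm]
  exact h.prod.hasSum

section Family

variable {J : Type*} {b θ : X → X → ℝ} {q m : X → ℝ} {bj : J → X → X → ℝ} {qj mj : J → X → ℝ}
  {p a k c C K : ℝ} {W : Finset X}

lemma exists_hasSum_sum_tsum_compl_le {f : J → X → X → ℝ} {g : X → X → ℝ}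
    (hf : ∀ j x y, 0 ≤ f j x y) (hfs : ∀ x y, Summable (f · x y))
    (hfg : ∀ x y, ∑' j, f j x y ≤ C * g x y) (hg : ∀ x, Summable (g x)) (W : Finset X) :
    ∃ s ≤ C * ∑ x ∈ W, ∑' y : {y // y ∉ W}, g x y,
      HasSum (fun j => ∑ x ∈ W, ∑' y : {y // y ∉ W}, f j x y) s := by
  have hrow : ∀ x, Summable fun y : {y // y ∉ W} => ∑' j, f j x y := fun x =>
    Summable.of_nonneg_of_le (fun y => tsum_nonneg fun j => hf j x y) (fun y => hfg x y)
      (((hg x).subtype _).mul_left C)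
  refine ⟨_, ?_, hasSum_sum fun x _ =>
    hasSum_tsum_of_summable_tsum (fun j y => hf j x y) (fun y => hfs x y) (hrow x)⟩
  rw [Finset.mul_sum]
  gcongr with x
  rw [← tsum_mul_left]
  exact (hrow x).tsum_le_tsum (fun y => hfg x y) (((hg x).subtype _).mul_left C)

lemma exists_hasSum_bBoundary_le (hbj : ∀ j x y, 0 ≤ bj j x y)
    (hbsum : ∀ x y, Summable (bj · x y)) (hbu : ∀ x y, ∑' j, bj j x y ≤ C * b x y)
    (hrow : ∀ x, Summable (b x)) (hsymm : ∀ x y, b x y = b y x) :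
    ∃ s ≤ C * bBoundary b W, HasSum (fun j => bBoundary (bj j) W) s := by
  obtain ⟨s₁, hs₁, h₁⟩ := exists_hasSum_sum_tsum_compl_le hbj hbsum hbu hrow W
  obtain ⟨s₂, hs₂, h₂⟩ := exists_hasSum_sum_tsum_compl_le (f := fun j x y => bj j y x)
    (g := fun x y => b y x) (fun j x y => hbj j y x) (fun x y => hbsum y x)
    (fun x y => hbu y x) (fun x => (hrow x).congr (hsymm x)) W
  exact ⟨s₁ + s₂, by unfold bBoundary; linarith, h₁.add h₂⟩

lemma mul_sum_le_frustEnergy_of_family (ha : 0 ≤ a) (hbj : ∀ j x y, 0 ≤ bj j x y)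
    (hsj : ∀ j, MagSparse (bj j) θ (qj j) (mj j) p a k)
    (hrow : ∀ x, Summable (b x)) (hsymm : ∀ x y, b x y = b y x)
    (hbsum : ∀ x y, Summable (bj · x y)) (hbl : ∀ x y, c * b x y ≤ ∑' j, bj j x y)
    (hbu : ∀ x y, ∑' j, bj j x y ≤ C * b x y)
    (hqsum : ∀ x, Summable fun j => max (qj j x) 0 * mj j x)
    (hqu : ∀ x, ∑' j, max (qj j x) 0 * mj j x ≤ C * (max (q x) 0 * m x))
    (hK : HasSum (fun j => k * ∑ x ∈ W, mj j x) K) {τ : X → ℂ} (hτ : ∀ x ∈ W, ‖τ x‖ = 1) :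
    c * ∑ x ∈ W, ∑ y ∈ W, b x y ≤
      (1 + a) * C * frustEnergy b θ p W τ +
      a * C * ((1 / 2) * bBoundary b W + ∑ x ∈ W, max (q x) 0 * m x) + K := by
  set t : X → X → ℝ := fun x y => ‖τ x - Complex.exp ((θ x y : ℂ) * Complex.I) * τ y‖ ^ p
  have hL : HasSum (fun j => ∑ x ∈ W, ∑ y ∈ W, bj j x y) (∑ x ∈ W, ∑ y ∈ W, ∑' j, bj j x y) :=
    hasSum_sum fun x _ => hasSum_sum fun y _ => (hbsum x y).hasSum
  have hE : HasSum (fun j => frustEnergy (bj j) θ p W τ)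
      ((1 / 2) * ∑ x ∈ W, ∑ y ∈ W, (∑' j, bj j x y) * t x y) :=
    (hasSum_sum fun x _ => hasSum_sum fun y _ => (hbsum x y).hasSum.mul_right (t x y)).mul_left _
  have hQ : HasSum (fun j => ∑ x ∈ W, max (qj j x) 0 * mj j x)
      (∑ x ∈ W, ∑' j, max (qj j x) 0 * mj j x) :=
    hasSum_sum fun x _ => (hqsum x).hasSum
  obtain ⟨β, hβ, hB⟩ := exists_hasSum_bBoundary_le (W := W) hbj hbsum hbu hrow hsymm
  have hsum := hasSum_le (fun j => sum_le_frustEnergy_of_magSparse (hsj j) ha (hbj j) hτ) hL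
    (((hE.mul_left (1 + a)).add (((hB.mul_left (1 / 2)).add hQ).mul_left a)).add hK)
  have hLb : c * ∑ x ∈ W, ∑ y ∈ W, b x y ≤ ∑ x ∈ W, ∑ y ∈ W, ∑' j, bj j x y := by
    simp_rw [Finset.mul_sum]
    gcongr with x _ y _
    exact hbl x y
  have hEb : ∑ x ∈ W, ∑ y ∈ W, (∑' j, bj j x y) * t x y ≤
      C * ∑ x ∈ W, ∑ y ∈ W, b x y * t x y := by
    simp_rw [Finset.mul_sum, ← mul_assoc]
    gcongr with x _ y _
    exact hbu x y
  have hEτ : frustEnergy b θ p W τ = (1 / 2) * ∑ x ∈ W, ∑ y ∈ W, b x y * t x y := rfl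
  have hQb : ∑ x ∈ W, ∑' j, max (qj j x) 0 * mj j x ≤ C * ∑ x ∈ W, max (q x) 0 * m x := by
    rw [Finset.mul_sum]
    exact Finset.sum_le_sum fun x _ => hqu x
  have := mul_le_mul_of_nonneg_left hEb (by linarith : (0 : ℝ) ≤ (1 + a) / 2)
  have := mul_le_mul_of_nonneg_left hβ ha
  have := mul_le_mul_of_nonneg_left hQb ha
  rw [hEτ]
  linarith

lemma mul_sum_le_frust_of_family (ha : 0 ≤ a) (hC : 0 < C) (hbj : ∀ j x y, 0 ≤ bj j x y)
    (hsj : ∀ j, MagSparse (bj j) θ (qj j) (mj j) p a k)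
    (hrow : ∀ x, Summable (b x)) (hsymm : ∀ x y, b x y = b y x)
    (hbsum : ∀ x y, Summable (bj · x y)) (hbl : ∀ x y, c * b x y ≤ ∑' j, bj j x y)
    (hbu : ∀ x y, ∑' j, bj j x y ≤ C * b x y)
    (hqsum : ∀ x, Summable fun j => max (qj j x) 0 * mj j x)
    (hqu : ∀ x, ∑' j, max (qj j x) 0 * mj j x ≤ C * (max (q x) 0 * m x))
    (hK : HasSum (fun j => k * ∑ x ∈ W, mj j x) K) :
    c * ∑ x ∈ W, ∑ y ∈ W, b x y ≤
      (1 + a) * C * frust b θ p W +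
      a * C * ((1 / 2) * bBoundary b W + ∑ x ∈ W, max (q x) 0 * m x) + K := by
  have hpos : 0 < (1 + a) * C := by positivity
  have := le_frust (b := b) (θ := θ) (p := p) (W := W)
    (r := (c * ∑ x ∈ W, ∑ y ∈ W, b x y -
      a * C * ((1 / 2) * bBoundary b W + ∑ x ∈ W, max (q x) 0 * m x) - K) / ((1 + a) * C))
    fun τ hτ => by
      rw [div_le_iff₀ hpos]
      linarith [mul_sum_le_frustEnergy_of_family ha hbj hsj hrow hsymm hbsum hbl hbu hqsum hqu hK hτ]
  rw [div_le_iff₀ hpos] at this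
  linarith

end Family

lemma magSparse_of_mul_le {b θ : X → X → ℝ} {q m : X → ℝ} {p a k c C : ℝ} (hc : 0 < c)
    (hcC : c ≤ C) (hb : ∀ x y, 0 ≤ b x y) (hm : ∀ x, 0 ≤ m x)
    (h : ∀ W : Finset X, c * ∑ x ∈ W, ∑ y ∈ W, b x y ≤
      (1 + a) * C * frust b θ p W +
      a * C * ((1 / 2) * bBoundary b W + ∑ x ∈ W, max (q x) 0 * m x) + c * k * ∑ x ∈ W, m x) :
    MagSparse b θ q m p (a * C / c + C / c - 1) k := by
  intro W
  have hP : 0 ≤ (1 / 2) * bBoundary b W + ∑ x ∈ W, max (q x) 0 * m x :=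
    add_nonneg (mul_nonneg (by norm_num) (bBoundary_nonneg hb W))
      (Finset.sum_nonneg fun x _ => mul_nonneg (le_max_right _ _) (hm x))
  have hscale : c * ((1 + (a * C / c + C / c - 1)) * frust b θ p W +
      (a * C / c + C / c - 1) * ((1 / 2) * bBoundary b W + ∑ x ∈ W, max (q x) 0 * m x) +
      k * ∑ x ∈ W, m x) =
      (1 + a) * C * frust b θ p W +
      (a * C + (C - c)) * ((1 / 2) * bBoundary b W + ∑ x ∈ W, max (q x) 0 * m x) +
      c * k * ∑ x ∈ W, m x := by
    field_simp
    ring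
  refine le_of_mul_le_mul_left ?_ hc
  rw [hscale]
  nlinarith [h W, mul_nonneg (sub_nonneg.2 hcC) hP]

theorem subgraph_criterion_general
    (b θ : X → X → ℝ) (q m : X → ℝ) (hG : IsMagneticGraph b θ m)
    (p : ℝ)
    (J : Type*) (bj : J → X → X → ℝ) (qj : J → X → ℝ) (mj : J → X → ℝ)
    (hGj : ∀ j, IsMagneticGraph (bj j) θ (mj j))
    (a k : ℝ) (ha : 0 ≤ a) (hk : 0 ≤ k)
    (c C M : ℝ) (hc : 0 < c) (hcC : c < C)
    (hsj : ∀ j, MagSparse (bj j) θ (qj j) (mj j) p a k)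
    (hbsum : ∀ x y, Summable fun j => bj j x y)
    (hbl : ∀ x y, c * b x y ≤ ∑' j, bj j x y)
    (hbu : ∀ x y, (∑' j, bj j x y) ≤ C * b x y)
    (hqsum : ∀ x, Summable fun j => max (qj j x) 0 * mj j x)
    (hqu : ∀ x, (∑' j, max (qj j x) 0 * mj j x) ≤ C * (max (q x) 0 * m x)) :
    ((∀ x, Summable fun j => mj j x) → (∀ x, (∑' j, mj j x) ≤ M * m x) →
      MagSparse b θ q m p (a * C / c + C / c - 1) (M * k / c)) ∧
    (k = 0 → MagSparse b θ q m p (a * C / c + C / c - 1) 0) := by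
  obtain ⟨hb, hsymm, -, hrow, -, hm⟩ := hG
  have bound : ∀ W K, HasSum (fun j => k * ∑ x ∈ W, mj j x) K →
      c * ∑ x ∈ W, ∑ y ∈ W, b x y ≤ (1 + a) * C * frust b θ p W +
        a * C * ((1 / 2) * bBoundary b W + ∑ x ∈ W, max (q x) 0 * m x) + K :=
    fun W K hK => mul_sum_le_frust_of_family ha (hc.trans hcC) (fun j => (hGj j).1) hsj hrow
      hsymm hbsum hbl hbu hqsum hqu hK
  refine ⟨fun hmsum hmle => magSparse_of_mul_le hc hcC.le hb (fun x => (hm x).le) fun W => ?_,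
    fun hk0 => magSparse_of_mul_le hc hcC.le hb (fun x => (hm x).le) fun W => ?_⟩
  · have hmW := mul_le_mul_of_nonneg_left (Finset.sum_le_sum fun x (_ : x ∈ W) => hmle x) hk
    rw [← Finset.mul_sum] at hmW
    rw [mul_div_cancel₀ _ hc.ne']
    linarith [bound W _ ((hasSum_sum fun x _ => (hmsum x).hasSum).mul_left k)]
  · subst hk0
    simpa using bound W 0 (by simp)

/-- subgraph criterion: if a family `(b_j, θ, q_j, m_j)_{j∈J}` of
`(a,k)_p`-magnetic-sparse graphs satisfies
(a) `c·b ≤ Σ_j b_j ≤ C·b`, (b) `Σ_j q_{j,+} m_j ≤ C·q₊ m` and (c) `Σ_j m_j ≤ M·m`,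
then `(b,θ,q,m)` is `(aC/c + C/c − 1, Mk/c)_p`-magnetic-sparse; if `k = 0`,
conditions (a) and (b) alone give `(aC/c + C/c − 1, 0)_p`-magnetic-sparseness. -/
theorem subgraph_criterion [Countable X]
    (b θ : X → X → ℝ) (q m : X → ℝ) (hG : IsMagneticGraph b θ m)
    (p : ℝ) (hp : 1 ≤ p)
    (J : Type*) (bj : J → X → X → ℝ) (qj : J → X → ℝ) (mj : J → X → ℝ)
    (hGj : ∀ j, IsMagneticGraph (bj j) θ (mj j))
    (a k : ℝ) (ha : 0 ≤ a) (hk : 0 ≤ k)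
    (c C M : ℝ) (hc : 0 < c) (hcC : c < C) (hM : 0 < M)
    (hsj : ∀ j, MagSparse (bj j) θ (qj j) (mj j) p a k)
    (hbsum : ∀ x y, Summable fun j => bj j x y)
    (hbl : ∀ x y, c * b x y ≤ ∑' j, bj j x y)
    (hbu : ∀ x y, (∑' j, bj j x y) ≤ C * b x y)
    (hqsum : ∀ x, Summable fun j => max (qj j x) 0 * mj j x)
    (hqu : ∀ x, (∑' j, max (qj j x) 0 * mj j x) ≤ C * (max (q x) 0 * m x)) :
    ((∀ x, Summable fun j => mj j x) → (∀ x, (∑' j, mj j x) ≤ M * m x) →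
      MagSparse b θ q m p (a * C / c + C / c - 1) (M * k / c)) ∧
    (k = 0 → MagSparse b θ q m p (a * C / c + C / c - 1) 0) :=
  subgraph_criterion_general b θ q m hG p J bj qj mj hGj a k ha hk c C M hc hcC hsj hbsum hbl hbu
    hqsum hqu
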